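/- arXiv:2502.13631 — 2 statements merged into one kernel-verified Lean document; each statement's English description precedes it below -/
import Mathlib

section
/- In any optimal WSPT schedule for an instance of Pm||∑w_jC_j with maximum processing time p_max and maximum weight w_max, the deviation Δ_{i,ℓ} of the load of jobs with efficiency at least e_(i) on machine ℓ from the average load μ_i of such jobs satisfies |Δ_{i,ℓ}| ≤ √(m·w_max)·p_max², for every efficiency index i and machine ℓ. -/
/-- Total processing time of jobs with efficiency at least `t` assigned to machine `ℓ`
by the assignment `σ` (in a WSPT schedule the job order on each machine is by
non-increasing efficiency, so the assignment determines the schedule). -/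
def mLoad {n m : ℕ} (p w : Fin n → ℕ) (σ : Fin n → Fin m) (t : ℚ) (ℓ : Fin m) : ℚ :=
  ∑ j ∈ Finset.univ.filter (fun j => t ≤ (w j : ℚ) / (p j : ℚ) ∧ σ j = ℓ), (p j : ℚ)

/-- Total processing time of all jobs with efficiency at least `t`. -/
def totLoad {n : ℕ} (p w : Fin n → ℕ) (t : ℚ) : ℚ :=
  ∑ j ∈ Finset.univ.filter (fun j => t ≤ (w j : ℚ) / (p j : ℚ)), (p j : ℚ)

/-- The deviation `Δ_{i,ℓ} = μ_i − P(J₁^ℓ ∪ ⋯ ∪ J_i^ℓ)` at efficiency threshold `t`. -/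
def dev {n m : ℕ} (p w : Fin n → ℕ) (σ : Fin n → Fin m) (t : ℚ) (ℓ : Fin m) : ℚ :=
  totLoad p w t / m - mLoad p w σ t ℓ

/-- Goemans–Williamson expression for the total weighted completion time of the
WSPT schedule determined by the assignment `σ`, where `e 0 > e 1 > ⋯ > e (k-1)` are
the distinct efficiencies and `e k = 0`. -/
def fObj {n m : ℕ} (p w : Fin n → ℕ) (e : ℕ → ℚ) (k : ℕ) (σ : Fin n → Fin m) : ℚ :=
  (∑ i ∈ Finset.range k, (e i - e (i + 1)) * ∑ ℓ : Fin m, (mLoad p w σ (e i) ℓ) ^ 2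
    + ∑ j : Fin n, (w j : ℚ) * (p j : ℚ)) / 2

/-- The function `g(σ) = ∑_i (e_(i) − e_(i+1)) ∑_ℓ Δ_{i,ℓ}²`. -/
def gObj {n m : ℕ} (p w : Fin n → ℕ) (e : ℕ → ℚ) (k : ℕ) (σ : Fin n → Fin m) : ℚ :=
  ∑ i ∈ Finset.range k, (e i - e (i + 1)) * ∑ ℓ : Fin m, (dev p w σ (e i) ℓ) ^ 2

/-!
An optimal assignment minimises `gObj`, since `fObj σ = (C + gObj σ) / 2` with `C` independent
of `σ` (the squared machine loads split into the squared mean plus the squared deviations).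
Greedy list scheduling in order of non-increasing efficiency, always choosing a least-loaded
machine, gives an assignment whose loads above every efficiency threshold differ by at most
`pmax`; its deviations are therefore at most `pmax`, and telescoping the gaps gives
`gObj ≤ e₀ · m · pmax² ≤ wmax · m · pmax²`. Two distinct efficiencies `w/p` with `p ≤ pmax`
differ by at least `1 / pmax²`, so a single term of `gObj σ` already forces
`Δ² ≤ m · wmax · pmax⁴`.
-/

open Finset

section Balanced

variable {ι κ : Type*}

def IsBalanced (P : ℚ) (L : κ → ℚ) : Prop :=
  ∀ a b, L a ≤ L b + P

lemma IsBalanced.add_ite_of_isMin [DecidableEq κ] {P x : ℚ} {L : κ → ℚ} (hL : IsBalanced P L)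
    {c : κ} (hc : ∀ b, L c ≤ L b) (hx₀ : 0 ≤ x) (hxP : x ≤ P) :
    IsBalanced P (fun ℓ => L ℓ + if ℓ = c then x else 0) := by
  intro a b
  by_cases ha : a = c <;> by_cases hb : b = c <;>
    simp only [ha, hb, if_true, if_false] <;> linarith [hL a b, hL a c, hc b]

lemma IsBalanced.abs_mean_sub_le [Fintype κ] {P : ℚ} {L : κ → ℚ} (hL : IsBalanced P L) (ℓ : κ) :
    |(∑ b, L b) / Fintype.card κ - L ℓ| ≤ P := by
  have hcard : (0 : ℚ) < Fintype.card κ := by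
    exact_mod_cast Fintype.card_pos_iff.mpr ⟨ℓ⟩
  have hupper : ∑ b, L b ≤ Fintype.card κ * L ℓ + Fintype.card κ * P := by
    simpa using sum_le_sum fun b (_ : b ∈ univ) => hL b ℓ
  have hlower : Fintype.card κ * L ℓ ≤ ∑ b, L b + Fintype.card κ * P := by
    simpa [sum_add_distrib] using sum_le_sum fun b (_ : b ∈ univ) => hL ℓ b
  rw [abs_le, le_sub_iff_add_le, sub_le_iff_le_add, le_div_iff₀ hcard, div_le_iff₀ hcard]
  constructor <;> linarith

def thresholdLoad [DecidableEq κ] (p f : ι → ℚ) (s : Finset ι) (τ : ι → κ) (t : ℚ) (ℓ : κ) : ℚ :=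
  ∑ j ∈ s with t ≤ f j ∧ τ j = ℓ, p j

lemma thresholdLoad_of_forall_le [DecidableEq κ] {p f : ι → ℚ} {s : Finset ι} {t : ℚ}
    (ht : ∀ x ∈ s, t ≤ f x) (τ : ι → κ) (ℓ : κ) :
    thresholdLoad p f s τ t ℓ = ∑ j ∈ s with τ j = ℓ, p j := by
  unfold thresholdLoad
  congr 1
  exact filter_congr fun x hx => and_iff_right (ht x hx)

lemma thresholdLoad_insert_update [DecidableEq ι] [DecidableEq κ] (p f : ι → ℚ) {s : Finset ι}
    {a : ι} (ha : a ∉ s) (τ : ι → κ) (c : κ) (t : ℚ) (ℓ : κ) :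
    thresholdLoad p f (insert a s) (Function.update τ a c) t ℓ
      = thresholdLoad p f s τ t ℓ + if t ≤ f a ∧ c = ℓ then p a else 0 := by
  unfold thresholdLoad
  rw [sum_filter, sum_filter, sum_insert ha, Function.update_self, add_comm]
  congr 1
  refine sum_congr rfl fun x hx => ?_
  rw [Function.update_of_ne (ne_of_mem_of_not_mem hx ha)]

/-- Greedy list scheduling: insert the jobs by decreasing key, each on a least-loaded machine. -/
theorem exists_forall_isBalanced_thresholdLoad [DecidableEq κ] [Finite κ] [Nonempty κ]
    {p : ι → ℚ} {P : ℚ} (hp₀ : ∀ j, 0 ≤ p j) (hpP : ∀ j, p j ≤ P) (hP : 0 ≤ P) (f : ι → ℚ)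
    (s : Finset ι) :
    ∃ τ : ι → κ, ∀ t, IsBalanced P (thresholdLoad p f s τ t) := by
  classical
  induction s using Finset.induction_on_min_value f with
  | empty =>
    obtain ⟨c⟩ := ‹Nonempty κ›
    exact ⟨fun _ => c, fun t a b => by simpa [thresholdLoad] using hP⟩
  | insert a s ha hmin ih =>
    obtain ⟨τ, hτ⟩ := ih
    obtain ⟨c, hc⟩ := Finite.exists_min fun ℓ => ∑ j ∈ s with τ j = ℓ, p j
    refine ⟨Function.update τ a c, fun t x y => ?_⟩
    simp only [thresholdLoad_insert_update p f ha]
    by_cases hta : t ≤ f a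
    · have hs : ∀ x ∈ s, t ≤ f x := fun x hx => hta.trans (hmin x hx)
      have hbal := (hτ t).add_ite_of_isMin (c := c)
        (by simpa only [thresholdLoad_of_forall_le hs] using hc) (hp₀ a) (hpP a)
      simpa only [hta, true_and, eq_comm (a := c)] using hbal x y
    · simpa only [hta, false_and, if_false, add_zero] using hτ t x y

end Balanced

lemma sum_sq_eq_sq_sum_div_card_add_sum_sq_mean_sub {κ : Type*} [Fintype κ] (L : κ → ℚ) :
    ∑ b, L b ^ 2 = (∑ b, L b) ^ 2 / Fintype.card κ
      + ∑ b, ((∑ c, L c) / Fintype.card κ - L b) ^ 2 := by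
  rcases isEmpty_or_nonempty κ with hκ | hκ
  · simp
  set S := ∑ b, L b
  have hcard : (Fintype.card κ : ℚ) ≠ 0 := by positivity
  have hexpand : ∑ b, (S / Fintype.card κ - L b) ^ 2
      = Fintype.card κ * (S / Fintype.card κ) ^ 2 - 2 * (S / Fintype.card κ) * S
        + ∑ b, L b ^ 2 := by
    simp only [sub_sq, sum_add_distrib, sum_sub_distrib, sum_const, card_univ, nsmul_eq_mul,
      ← mul_sum, S]
  rw [hexpand]
  field_simp
  ring

lemma one_le_mul_mul_div_sub_div_of_div_lt {a b c d : ℕ} (hb : 0 < b) (hd : 0 < d)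
    (h : (c : ℚ) / d < a / b) : 1 ≤ (b * d : ℚ) * (a / b - c / d) := by
  have hb' : (0 : ℚ) < b := by exact_mod_cast hb
  have hd' : (0 : ℚ) < d := by exact_mod_cast hd
  have hcross : c * b < a * d := by exact_mod_cast (div_lt_div_iff₀ hd' hb').mp h
  have hexpand : (b * d : ℚ) * (a / b - c / d) = a * d - c * b := by
    field_simp
  rw [hexpand, le_sub_iff_add_le']
  exact_mod_cast hcross

section Schedule

variable {n m : ℕ} (p w : Fin n → ℕ)

lemma sum_mLoad (σ : Fin n → Fin m) (t : ℚ) : ∑ ℓ, mLoad p w σ t ℓ = totLoad p w t := by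
  unfold mLoad totLoad
  simp only [← filter_filter, sum_fiberwise]

lemma dev_eq_mean_sub (σ : Fin n → Fin m) (t : ℚ) (ℓ : Fin m) :
    dev p w σ t ℓ = (∑ b, mLoad p w σ t b) / Fintype.card (Fin m) - mLoad p w σ t ℓ := by
  rw [sum_mLoad, Fintype.card_fin, dev]

lemma abs_dev_le_of_isBalanced {σ : Fin n → Fin m} {t P : ℚ} (h : IsBalanced P (mLoad p w σ t))
    (ℓ : Fin m) : |dev p w σ t ℓ| ≤ P := by
  rw [dev_eq_mean_sub]
  exact h.abs_mean_sub_le ℓ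

theorem exists_forall_isBalanced_mLoad (hm : 0 < m) {pmax : ℕ} (hpmax : ∀ j, p j ≤ pmax) :
    ∃ τ : Fin n → Fin m, ∀ t, IsBalanced pmax (mLoad p w τ t) :=
  have : Nonempty (Fin m) := ⟨⟨0, hm⟩⟩
  exists_forall_isBalanced_thresholdLoad (fun j => Nat.cast_nonneg (p j))
    (fun j => Nat.cast_le.mpr (hpmax j)) (Nat.cast_nonneg pmax) _ univ

lemma sum_sq_mLoad (σ : Fin n → Fin m) (t : ℚ) :
    ∑ ℓ, mLoad p w σ t ℓ ^ 2 = totLoad p w t ^ 2 / m + ∑ ℓ, dev p w σ t ℓ ^ 2 := by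
  simp only [sum_sq_eq_sq_sum_div_card_add_sum_sq_mean_sub (mLoad p w σ t), dev_eq_mean_sub,
    sum_mLoad, Fintype.card_fin]

lemma sub_mul_sq_dev_le_gObj {e : ℕ → ℚ} {k : ℕ} (hdec : ∀ i < k, e (i + 1) ≤ e i)
    (σ : Fin n → Fin m) {i : ℕ} (hi : i < k) (ℓ : Fin m) :
    (e i - e (i + 1)) * dev p w σ (e i) ℓ ^ 2 ≤ gObj p w e k σ := by
  have hgap : ∀ i ∈ range k, 0 ≤ e i - e (i + 1) :=
    fun i hi => sub_nonneg.mpr (hdec i (mem_range.mp hi))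
  calc (e i - e (i + 1)) * dev p w σ (e i) ℓ ^ 2
      ≤ (e i - e (i + 1)) * ∑ ℓ', dev p w σ (e i) ℓ' ^ 2 := by
        gcongr
        · exact hgap i (mem_range.mpr hi)
        · exact single_le_sum (fun ℓ' _ => sq_nonneg _) (mem_univ ℓ)
    _ ≤ gObj p w e k σ :=
        single_le_sum (fun j hj => mul_nonneg (hgap j hj) (sum_nonneg fun _ _ => sq_nonneg _))
          (mem_range.mpr hi)

variable {p w} {e : ℕ → ℚ} {k : ℕ}

lemma fObj_eq (σ : Fin n → Fin m) :
    fObj p w e k σ = (∑ i ∈ range k, (e i - e (i + 1)) * (totLoad p w (e i) ^ 2 / m)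
      + ∑ j, (w j : ℚ) * p j + gObj p w e k σ) / 2 := by
  simp only [fObj, gObj, sum_sq_mLoad, mul_add, sum_add_distrib]
  ring

lemma gObj_le_gObj_of_fObj_le {σ τ : Fin n → Fin m} (h : fObj p w e k σ ≤ fObj p w e k τ) :
    gObj p w e k σ ≤ gObj p w e k τ := by
  rw [fObj_eq, fObj_eq] at h
  linarith

lemma gObj_le_of_abs_dev_le (hdec : ∀ i < k, e (i + 1) ≤ e i) {τ : Fin n → Fin m} {P : ℚ}
    (hτ : ∀ i < k, ∀ ℓ, |dev p w τ (e i) ℓ| ≤ P) :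
    gObj p w e k τ ≤ (e 0 - e k) * (m * P ^ 2) := by
  rw [← sum_range_sub', sum_mul, gObj]
  refine sum_le_sum fun i hi => ?_
  have hi : i < k := mem_range.mp hi
  gcongr
  · exact sub_nonneg.mpr (hdec i hi)
  · calc ∑ ℓ, dev p w τ (e i) ℓ ^ 2 ≤ ∑ _ℓ : Fin m, P ^ 2 :=
          sum_le_sum fun ℓ _ => sq_le_sq' (abs_le.mp (hτ i hi ℓ)).1 (abs_le.mp (hτ i hi ℓ)).2
      _ = m * P ^ 2 := by simp

lemma one_le_sq_mul_sub_succ {pmax : ℕ} (hp : ∀ j, 0 < p j) (hpmax : ∀ j, p j ≤ pmax)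
    (hdec : ∀ i < k, e (i + 1) < e i) (hek : e k = 0)
    (hrng : ∀ i < k, ∃ j, (w j : ℚ) / (p j : ℚ) = e i) {i : ℕ} (hi : i < k) :
    1 ≤ (pmax : ℚ) ^ 2 * (e i - e (i + 1)) := by
  obtain ⟨a, ha⟩ := hrng i hi
  have hnext : ∃ c d : ℕ, 0 < d ∧ d ≤ pmax ∧ (c : ℚ) / d = e (i + 1) := by
    obtain hik | hik := (show i + 1 ≤ k from hi).lt_or_eq
    · obtain ⟨b, hb⟩ := hrng (i + 1) hik
      exact ⟨w b, p b, hp b, hpmax b, hb⟩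
    · exact ⟨0, 1, one_pos, (hp a).trans_le (hpmax a), by simp [hik, hek]⟩
  obtain ⟨c, d, hd, hdp, hcd⟩ := hnext
  have hone := one_le_mul_mul_div_sub_div_of_div_lt (hp a) hd
    (by rw [ha, hcd]; exact hdec i hi)
  rw [ha, hcd] at hone
  have hden : (p a * d : ℚ) ≤ (pmax : ℚ) ^ 2 := by
    rw [sq]
    exact_mod_cast Nat.mul_le_mul (hpmax a) hdp
  calc 1 ≤ (p a * d : ℚ) * (e i - e (i + 1)) := hone
    _ ≤ (pmax : ℚ) ^ 2 * (e i - e (i + 1)) := by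
      gcongr
      exact sub_nonneg.mpr (hdec i hi).le

end Schedule

theorem stmt_9_general (m k n pmax wmax : ℕ) (hm : 0 < m)
    (p w : Fin n → ℕ)
    (hp : ∀ j, 0 < p j) (hpmax : ∀ j, p j ≤ pmax)
    (hwmax : ∀ j, w j ≤ wmax)
    (e : ℕ → ℚ) (hdec : ∀ i < k, e (i + 1) < e i) (hek : e k = 0)
    (hrng : ∀ i < k, ∃ j, (w j : ℚ) / (p j : ℚ) = e i)
    (σ : Fin n → Fin m)
    (hopt : ∀ τ : Fin n → Fin m, fObj p w e k σ ≤ fObj p w e k τ) :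
    ∀ i < k, ∀ ℓ : Fin m,
      |((dev p w σ (e i) ℓ : ℚ) : ℝ)| ≤ Real.sqrt (m * wmax) * (pmax : ℝ) ^ 2 := by
  intro i hi ℓ
  have hdec' : ∀ i < k, e (i + 1) ≤ e i := fun i hi => (hdec i hi).le
  have he₀ : e 0 ≤ wmax := by
    obtain ⟨j, hj⟩ := hrng 0 (Nat.zero_lt_of_lt hi)
    rw [← hj]
    exact (div_le_self (Nat.cast_nonneg _) (by exact_mod_cast hp j)).trans
      (by exact_mod_cast hwmax j)
  obtain ⟨τ, hτ⟩ := exists_forall_isBalanced_mLoad p w hm hpmax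
  have hgσ : gObj p w e k σ ≤ wmax * (m * (pmax : ℚ) ^ 2) :=
    calc gObj p w e k σ ≤ gObj p w e k τ := gObj_le_gObj_of_fObj_le (hopt τ)
      _ ≤ (e 0 - e k) * (m * (pmax : ℚ) ^ 2) :=
        gObj_le_of_abs_dev_le hdec' fun _ _ ℓ => abs_dev_le_of_isBalanced p w (hτ _) ℓ
      _ ≤ wmax * (m * (pmax : ℚ) ^ 2) := by rw [hek, sub_zero]; gcongr
  have hgap := one_le_sq_mul_sub_succ hp hpmax hdec hek hrng hi
  have hterm := sub_mul_sq_dev_le_gObj p w hdec' σ hi ℓ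
  have hsq : dev p w σ (e i) ℓ ^ 2 ≤ m * wmax * (pmax : ℚ) ^ 4 := by
    nlinarith [sq_nonneg (dev p w σ (e i) ℓ), sq_nonneg (pmax : ℚ)]
  calc |((dev p w σ (e i) ℓ : ℚ) : ℝ)| ≤ Real.sqrt (m * wmax * (pmax : ℝ) ^ 4) :=
        Real.abs_le_sqrt (by exact_mod_cast hsq)
    _ = Real.sqrt (m * wmax) * (pmax : ℝ) ^ 2 := by
        rw [Real.sqrt_mul (by positivity), show (pmax : ℝ) ^ 4 = ((pmax : ℝ) ^ 2) ^ 2 by ring,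
          Real.sqrt_sq (by positivity)]

theorem stmt_9 (m k n pmax wmax : ℕ) (hm : 0 < m) (hk : 0 < k)
    (p w : Fin n → ℕ)
    (hp : ∀ j, 0 < p j) (hpmax : ∀ j, p j ≤ pmax)
    (hw : ∀ j, 0 < w j) (hwmax : ∀ j, w j ≤ wmax)
    (e : ℕ → ℚ) (hdec : ∀ i < k, e (i + 1) < e i) (hek : e k = 0)
    (hcov : ∀ j, ∃ i < k, (w j : ℚ) / (p j : ℚ) = e i)
    (hrng : ∀ i < k, ∃ j, (w j : ℚ) / (p j : ℚ) = e i)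
    (σ : Fin n → Fin m)
    (hopt : ∀ τ : Fin n → Fin m, fObj p w e k σ ≤ fObj p w e k τ) :
    ∀ i < k, ∀ ℓ : Fin m,
      |((dev p w σ (e i) ℓ : ℚ) : ℝ)| ≤ Real.sqrt (m * wmax) * (pmax : ℝ) ^ 2 :=
  stmt_9_general m k n pmax wmax hm p w hp hpmax hwmax e hdec hek hrng σ hopt
end

section
/- Fix an instance of Pm||∑w_jC_j and i ∈ {1,...,k}. A vector Δ_i ∈ ℚ^m is a load-deviation vector for J₁∪···∪J_i (i.e., realized by some WSPT schedule) if and only if there exists y ∈ Y_i and a load-deviation vector Δ_{i−1} for J₁∪···∪J_{i−1} with Δ_i − y = Δ_{i−1}, where Δ_0 = 0. -/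
/-- `isDevVec p w e i v` states that `v` is a load-deviation vector for the jobs of
the `i` highest efficiency classes: `v` is realized by some WSPT schedule (given by an
assignment `σ`) of the whole instance, with `Δ_0 = 0` for `i = 0`. Here `e (i-1)` is the
`i`-th distinct efficiency `e_(i)` (0-based indexing of `e`). -/
def isDevVec {n m : ℕ} (p w : Fin n → ℕ) (e : ℕ → ℚ) : ℕ → (Fin m → ℚ) → Prop
  | 0, v => v = 0
  | i + 1, v => ∃ σ : Fin n → Fin m, ∀ ℓ, v ℓ = dev p w σ (e i) ℓ

/-- The set `Y_i` of vectors `(P(J_i)/m − x_1, …, P(J_i)/m − x_m)` where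
`(x_1, …, x_m)` ranges over load distributions of the jobs of efficiency exactly `t`
over the `m` machines. -/
def Yset (n m : ℕ) (p w : Fin n → ℕ) (t : ℚ) : Set (Fin m → ℚ) :=
  { y | ∃ σ : Fin n → Fin m, ∀ ℓ,
      y ℓ = (∑ j ∈ Finset.univ.filter (fun j => (w j : ℚ) / (p j : ℚ) = t), (p j : ℚ)) / m
        - ∑ j ∈ Finset.univ.filter (fun j => (w j : ℚ) / (p j : ℚ) = t ∧ σ j = ℓ), (p j : ℚ) }


private lemma sum_split {α : Type*} [Fintype α] [DecidableEq α] (f : α → ℚ) (P Q R : α → Prop)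
    [DecidablePred P] [DecidablePred Q] [DecidablePred R]
    (h : ∀ a, P a ↔ Q a ∨ R a) (hd : ∀ a, ¬(Q a ∧ R a)) :
    ∑ a ∈ Finset.univ.filter P, f a
      = ∑ a ∈ Finset.univ.filter Q, f a + ∑ a ∈ Finset.univ.filter R, f a := by
  have hun : Finset.univ.filter P = Finset.univ.filter Q ∪ Finset.univ.filter R := by
    ext a; simp [h a]
  rw [hun, Finset.sum_union]
  rw [Finset.disjoint_left]
  intro a ha hb
  simp only [Finset.mem_filter] at ha hb
  exact hd a ⟨ha.2, hb.2⟩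

theorem stmt_15 (m k n pmax wmax : ℕ) (hm : 0 < m) (hk : 0 < k)
    (p w : Fin n → ℕ)
    (hp : ∀ j, 0 < p j) (hpmax : ∀ j, p j ≤ pmax)
    (hw : ∀ j, 0 < w j) (hwmax : ∀ j, w j ≤ wmax)
    (e : ℕ → ℚ) (hdec : ∀ i < k, e (i + 1) < e i) (hek : e k = 0)
    (hcov : ∀ j, ∃ i < k, (w j : ℚ) / (p j : ℚ) = e i)
    (hrng : ∀ i < k, ∃ j, (w j : ℚ) / (p j : ℚ) = e i)
    (i : ℕ) (hi : i < k) (Δ : Fin m → ℚ) :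
    isDevVec p w e (i + 1) Δ ↔
      ∃ y ∈ Yset n m p w (e i), isDevVec p w e i (Δ - y) := by
  classical
  -- strict antitonicity of e on [0, k]
  have hanti : ∀ a b, a < b → b ≤ k → e b < e a := by
    intro a b hab hbk
    induction b with
    | zero => omega
    | succ b ih =>
      rcases Nat.lt_or_ge a b with h | h
      · exact lt_trans (hdec b (by omega)) (ih (by omega) (by omega))
      · have : a = b := by omega
        subst this
        exact hdec a (by omega)
  have hle : ∀ a b, a ≤ b → b ≤ k → e b ≤ e a := by
    intro a b hab hbk
    rcases Nat.lt_or_ge a b with h | h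
    · exact le_of_lt (hanti a b h hbk)
    · have : a = b := by omega
      subst this; exact le_refl _
  cases i with
  | zero =>
    -- filter equivalence: e 0 ≤ q j ↔ q j = e 0
    have heq : ∀ j : Fin n, e 0 ≤ (w j : ℚ) / (p j : ℚ) ↔ (w j : ℚ) / (p j : ℚ) = e 0 := by
      intro j
      obtain ⟨t, htk, hq⟩ := hcov j
      rw [hq]
      constructor
      · intro h
        exact le_antisymm (hle 0 t (Nat.zero_le _) (le_of_lt htk)) h
      · intro h; rw [h]
    have hdev0 : ∀ (σ : Fin n → Fin m) (ℓ : Fin m),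
        dev p w σ (e 0) ℓ
          = (∑ j ∈ Finset.univ.filter (fun j => (w j : ℚ) / (p j : ℚ) = e 0), (p j : ℚ)) / m
            - ∑ j ∈ Finset.univ.filter (fun j => (w j : ℚ) / (p j : ℚ) = e 0 ∧ σ j = ℓ), (p j : ℚ) := by
      intro σ ℓ
      unfold dev totLoad mLoad
      have h1 : Finset.univ.filter (fun j : Fin n => e 0 ≤ (w j : ℚ) / (p j : ℚ))
          = Finset.univ.filter (fun j => (w j : ℚ) / (p j : ℚ) = e 0) := by
        apply Finset.filter_congr; intro j _; simp [heq j]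
      have h2 : Finset.univ.filter (fun j : Fin n => e 0 ≤ (w j : ℚ) / (p j : ℚ) ∧ σ j = ℓ)
          = Finset.univ.filter (fun j => (w j : ℚ) / (p j : ℚ) = e 0 ∧ σ j = ℓ) := by
        apply Finset.filter_congr; intro j _; simp [heq j]
      rw [h1, h2]
    constructor
    · rintro ⟨σ, hσ⟩
      refine ⟨Δ, ⟨σ, fun ℓ => ?_⟩, ?_⟩
      · rw [hσ ℓ, hdev0]
      · show Δ - Δ = 0
        simp
    · rintro ⟨y, ⟨σ, hy⟩, h0⟩
      have h0' : Δ - y = 0 := h0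
      have : Δ = y := by rwa [sub_eq_zero] at h0'
      subst this
      exact ⟨σ, fun ℓ => by rw [hdev0, hy ℓ]⟩
  | succ i' =>
    have hi'k : i' < k := by omega
    have hik : i' + 1 < k := hi
    -- splitting lemma for the filters
    have hQR : ∀ j : Fin n, e (i' + 1) ≤ (w j : ℚ) / (p j : ℚ) ↔
        ((w j : ℚ) / (p j : ℚ) = e (i' + 1) ∨ e i' ≤ (w j : ℚ) / (p j : ℚ)) := by
      intro j
      obtain ⟨t, htk, hq⟩ := hcov j
      rw [hq]
      constructor
      · intro h
        have ht1 : t ≤ i' + 1 := by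
          by_contra hc
          push_neg at hc
          exact absurd h (not_le.mpr (hanti (i' + 1) t hc (le_of_lt htk)))
        rcases Nat.lt_or_ge t (i' + 1) with h2 | h2
        · exact Or.inr (hle t i' (by omega) (by omega))
        · have : t = i' + 1 := by omega
          subst this; exact Or.inl rfl
      · rintro (h | h)
        · rw [h]
        · exact le_trans (le_of_lt (hdec i' hi'k)) h
    have hX : ∀ j : Fin n, ¬((w j : ℚ) / (p j : ℚ) = e (i' + 1) ∧ e i' ≤ (w j : ℚ) / (p j : ℚ)) := by
      rintro j ⟨h1, h2⟩
      rw [h1] at h2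
      exact absurd h2 (not_le.mpr (hdec i' hi'k))
    -- dev split identity
    have hdevsplit : ∀ (σ : Fin n → Fin m) (ℓ : Fin m),
        dev p w σ (e (i' + 1)) ℓ = dev p w σ (e i') ℓ +
          ((∑ j ∈ Finset.univ.filter (fun j => (w j : ℚ) / (p j : ℚ) = e (i' + 1)), (p j : ℚ)) / m
            - ∑ j ∈ Finset.univ.filter (fun j => (w j : ℚ) / (p j : ℚ) = e (i' + 1) ∧ σ j = ℓ), (p j : ℚ)) := by
      intro σ ℓ
      unfold dev totLoad mLoad
      rw [sum_split (fun j => (p j : ℚ))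
        (fun j => e (i' + 1) ≤ (w j : ℚ) / (p j : ℚ))
        (fun j => (w j : ℚ) / (p j : ℚ) = e (i' + 1))
        (fun j => e i' ≤ (w j : ℚ) / (p j : ℚ)) hQR hX]
      rw [sum_split (fun j => (p j : ℚ))
        (fun j => e (i' + 1) ≤ (w j : ℚ) / (p j : ℚ) ∧ σ j = ℓ)
        (fun j => (w j : ℚ) / (p j : ℚ) = e (i' + 1) ∧ σ j = ℓ)
        (fun j => e i' ≤ (w j : ℚ) / (p j : ℚ) ∧ σ j = ℓ)
        (fun j => by constructor
                     · rintro ⟨h1, h2⟩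
                       rcases (hQR j).mp h1 with h | h
                       · exact Or.inl ⟨h, h2⟩
                       · exact Or.inr ⟨h, h2⟩
                     · rintro (⟨h1, h2⟩ | ⟨h1, h2⟩)
                       · exact ⟨(hQR j).mpr (Or.inl h1), h2⟩
                       · exact ⟨(hQR j).mpr (Or.inr h1), h2⟩)
        (fun j => by rintro ⟨⟨h1, _⟩, ⟨h2, _⟩⟩; exact hX j ⟨h1, h2⟩)]
      ring
    constructor
    · rintro ⟨σ, hσ⟩
      refine ⟨fun ℓ =>
        (∑ j ∈ Finset.univ.filter (fun j => (w j : ℚ) / (p j : ℚ) = e (i' + 1)), (p j : ℚ)) / m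
          - ∑ j ∈ Finset.univ.filter (fun j => (w j : ℚ) / (p j : ℚ) = e (i' + 1) ∧ σ j = ℓ), (p j : ℚ),
        ⟨σ, fun ℓ => rfl⟩, σ, fun ℓ => ?_⟩
      simp only [Pi.sub_apply]
      rw [hσ ℓ]
      linarith [hdevsplit σ ℓ]
    · rintro ⟨y, ⟨σ₁, hy⟩, σ₂, h2⟩
      set σ : Fin n → Fin m := fun j => if (w j : ℚ) / (p j : ℚ) = e (i' + 1) then σ₁ j else σ₂ j with hσdef
      refine ⟨σ, fun ℓ => ?_⟩
      have hprev : dev p w σ (e i') ℓ = dev p w σ₂ (e i') ℓ := by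
        unfold dev mLoad
        have : Finset.univ.filter (fun j : Fin n => e i' ≤ (w j : ℚ) / (p j : ℚ) ∧ σ j = ℓ)
            = Finset.univ.filter (fun j => e i' ≤ (w j : ℚ) / (p j : ℚ) ∧ σ₂ j = ℓ) := by
          apply Finset.filter_congr
          intro j _
          by_cases hj : e i' ≤ (w j : ℚ) / (p j : ℚ)
          · have hne : ¬((w j : ℚ) / (p j : ℚ) = e (i' + 1)) := fun hc => hX j ⟨hc, hj⟩
            simp [hσdef, hne, hj]
          · simp [hj]
        rw [this]
      have hexact : (∑ j ∈ Finset.univ.filter (fun j => (w j : ℚ) / (p j : ℚ) = e (i' + 1) ∧ σ j = ℓ), (p j : ℚ))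
          = ∑ j ∈ Finset.univ.filter (fun j => (w j : ℚ) / (p j : ℚ) = e (i' + 1) ∧ σ₁ j = ℓ), (p j : ℚ) := by
        congr 1
        apply Finset.filter_congr
        intro j _
        by_cases hj : (w j : ℚ) / (p j : ℚ) = e (i' + 1)
        · simp [hσdef, hj]
        · simp [hj]
      have h2' := h2 ℓ
      simp only [Pi.sub_apply] at h2'
      have := hdevsplit σ ℓ
      rw [hprev, hexact, ← hy ℓ] at this
      linarith [h2']
end
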